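/- Coarse-graining from the bottom is exact: in a composite process over observables X(0:b) generated by a feedforward network of transducers where the block of nodes 0,…,a−1 has no incoming edges from nodes a,…,b−1, the conditional interface satisfies 𝓘[X(a:b)|X(0:a)] = Pr(X(0:b)) / Pr(X(0:a)) and does not depend on the latent variables R(0:a) of the bottom block: conditioned on the observable trajectories X(0:a), the processes X(a:b) are conditionally independent of R(0:a). -/
import Mathlib


open Finset

section
variable {A C RB RT : Type} [Fintype A] [Fintype C] [Fintype RB] [Fintype RT]

/-- Conditional word probability of the top (downstream) block, a transducer with input
alphabet `A`, output alphabet `C` and latent space `RT`. -/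
def wpTop (f : RT → A → C → RT → ℝ) (πT : RT → ℝ)
    (t : ℕ) (a : Fin t → A) (c : Fin t → C) : ℝ :=
  ∑ σ : Fin (t + 1) → RT, πT (σ 0) * ∏ i : Fin t, f (σ i.castSucc) (a i) (c i) (σ i.succ)

/-- Weight of an observable trajectory `a` together with a latent trajectory `ρ` of the
bottom (input-less) block, with kernel `e(a, ρ'|ρ) = Pr(A_t = a, RB_{t+1} = ρ' | RB_t = ρ)`. -/
def bottomWeight (e : RB → A → RB → ℝ) (πB : RB → ℝ)
    (t : ℕ) (a : Fin t → A) (ρ : Fin (t + 1) → RB) : ℝ :=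
  πB (ρ 0) * ∏ i : Fin t, e (ρ i.castSucc) (a i) (ρ i.succ)

/-- Joint probability of bottom observables `a`, top observables `c` and the bottom
latent trajectory `ρ` in the two-block feedforward network (top latents marginalized). -/
def jointFull (e : RB → A → RB → ℝ) (πB : RB → ℝ) (f : RT → A → C → RT → ℝ)
    (πT : RT → ℝ) (t : ℕ) (a : Fin t → A) (c : Fin t → C)
    (ρ : Fin (t + 1) → RB) : ℝ :=
  bottomWeight e πB t a ρ * wpTop f πT t a c

/-- Joint probability `Pr(X(0:a) = a, X(a:b) = c)` of all observables. -/
def prAC (e : RB → A → RB → ℝ) (πB : RB → ℝ) (f : RT → A → C → RT → ℝ)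
    (πT : RT → ℝ) (t : ℕ) (a : Fin t → A) (c : Fin t → C) : ℝ :=
  ∑ ρ : Fin (t + 1) → RB, jointFull e πB f πT t a c ρ

/-- Marginal probability `Pr(X(0:a) = a)` of the bottom observables. -/
def prA (e : RB → A → RB → ℝ) (πB : RB → ℝ) (f : RT → A → C → RT → ℝ)
    (πT : RT → ℝ) (t : ℕ) (a : Fin t → A) : ℝ :=
  ∑ c : Fin t → C, prAC e πB f πT t a c

/-- Joint probability `Pr(X(0:a) = a, R(0:a)-trajectory = ρ)`. -/
def prARB (e : RB → A → RB → ℝ) (πB : RB → ℝ) (f : RT → A → C → RT → ℝ)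
    (πT : RT → ℝ) (t : ℕ) (a : Fin t → A) (ρ : Fin (t + 1) → RB) : ℝ :=
  ∑ c : Fin t → C, jointFull e πB f πT t a c ρ

set_option linter.unusedSectionVars false in
lemma sum_wpTop (f : RT → A → C → RT → ℝ)
    (hfsum : ∀ q a, ∑ c : C, ∑ q' : RT, f q a c q' = 1) :
    ∀ (t : ℕ) (π : RT → ℝ) (a : Fin t → A),
      ∑ c : Fin t → C, wpTop f π t a c = ∑ q, π q := by
  intro t
  induction t with
  | zero =>
    intro π a
    rw [Fintype.sum_unique]
    unfold wpTop
    simp only [Fin.prod_univ_zero, mul_one]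
    exact Fintype.sum_equiv (Equiv.funUnique (Fin 1) RT) _ _ (fun σ => rfl)
  | succ t ih =>
    intro π a
    have e1 : ∀ (c0 : C) (c' : Fin t → C),
        wpTop f π (t+1) a (Fin.cons c0 c')
          = ∑ r : RT, π r * wpTop f (fun q => f r (a 0) c0 q) t (fun j => a j.succ) c' := by
      intro c0 c'
      unfold wpTop
      rw [← Equiv.sum_comp (Fin.consEquiv (fun _ : Fin (t+2) => RT)), Fintype.sum_prod_type]
      refine Finset.sum_congr rfl fun r _ => ?_
      rw [Finset.mul_sum]
      refine Finset.sum_congr rfl fun σ' _ => ?_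
      simp only [Fin.consEquiv_apply, Fin.cons_zero, Fin.prod_univ_succ, Fin.cons_succ,
        Fin.castSucc_zero, Fin.succ_zero_eq_one]
      have h1 : (Fin.cons r σ' : Fin (t+2) → RT) (0 : Fin (t+1)).succ = σ' 0 := by
        simp
      have h2 : ∀ j : Fin t,
          (Fin.cons r σ' : Fin (t+2) → RT) (j.succ).castSucc = σ' j.castSucc := by
        intro j; rw [← Fin.succ_castSucc]; simp
      have h3 : ∀ j : Fin t,
          (Fin.cons r σ' : Fin (t+2) → RT) (j.succ).succ = σ' j.succ := by
        intro j; simp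
      simp only [h2]
    calc ∑ c : Fin (t+1) → C, wpTop f π (t+1) a c
        = ∑ p : C × (Fin t → C), wpTop f π (t+1) a (Fin.cons p.1 p.2) := by
          rw [← Equiv.sum_comp (Fin.consEquiv (fun _ : Fin (t+1) => C))]
          rfl
      _ = ∑ c0 : C, ∑ c' : Fin t → C, ∑ r : RT,
            π r * wpTop f (fun q => f r (a 0) c0 q) t (fun j => a j.succ) c' := by
          rw [Fintype.sum_prod_type]
          exact Finset.sum_congr rfl fun c0 _ => Finset.sum_congr rfl fun c' _ => e1 c0 c'
      _ = ∑ c0 : C, ∑ r : RT, ∑ c' : Fin t → C,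
            π r * wpTop f (fun q => f r (a 0) c0 q) t (fun j => a j.succ) c' :=
          Finset.sum_congr rfl fun c0 _ => Finset.sum_comm
      _ = ∑ r : RT, ∑ c0 : C, ∑ c' : Fin t → C,
            π r * wpTop f (fun q => f r (a 0) c0 q) t (fun j => a j.succ) c' :=
          Finset.sum_comm
      _ = ∑ r : RT, π r * ∑ c0 : C, ∑ c' : Fin t → C,
            wpTop f (fun q => f r (a 0) c0 q) t (fun j => a j.succ) c' := by
          simp only [Finset.mul_sum]
      _ = ∑ r : RT, π r := by
          refine Finset.sum_congr rfl fun r _ => ?_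
          have : ∀ c0 : C, ∑ c' : Fin t → C,
              wpTop f (fun q => f r (a 0) c0 q) t (fun j => a j.succ) c' = ∑ q, f r (a 0) c0 q :=
            fun c0 => ih _ _
          simp only [this, hfsum, mul_one]

/-- Coarse-graining from the bottom is exact: in a feedforward network
of transducers where the bottom block (observables `X(0:a)`, latents `R(0:a)`) has no
incoming edges from the downstream block, the conditional interface
`𝓘[X(a:b)|X(0:a)] = Pr(X(0:b)) / Pr(X(0:a))` is exactly the conditional word distribution
of the downstream transducer, so it does not depend on the bottom-block latent variables
(first conjunct, in product form `Pr(X(0:b)) = Pr(X(0:a)) · 𝓘[X(a:b)|X(0:a)]`); moreover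
conditioned on the observables `X(0:a)`, the downstream observables `X(a:b)` are
conditionally independent of the bottom latents `R(0:a)` (second conjunct, in
cross-multiplied form). -/
theorem coarse_graining_from_bottom
    (e : RB → A → RB → ℝ) (πB : RB → ℝ)
    (f : RT → A → C → RT → ℝ) (πT : RT → ℝ)
    (henn : ∀ ρ a ρ', 0 ≤ e ρ a ρ')
    (hesum : ∀ ρ, ∑ a : A, ∑ ρ' : RB, e ρ a ρ' = 1)
    (hfnn : ∀ q a c q', 0 ≤ f q a c q')
    (hfsum : ∀ q a, ∑ c : C, ∑ q' : RT, f q a c q' = 1)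
    (hπBnn : ∀ ρ, 0 ≤ πB ρ) (hπB : ∑ ρ : RB, πB ρ = 1)
    (hπTnn : ∀ q, 0 ≤ πT q) (hπT : ∑ q : RT, πT q = 1) :
    (∀ (t : ℕ) (a : Fin t → A) (c : Fin t → C),
      prAC e πB f πT t a c = prA e πB f πT t a * wpTop f πT t a c) ∧
    (∀ (t : ℕ) (a : Fin t → A) (c : Fin t → C) (ρ : Fin (t + 1) → RB),
      jointFull e πB f πT t a c ρ * prA e πB f πT t a
        = prAC e πB f πT t a c * prARB e πB f πT t a ρ) := by
  have hS : ∀ (t : ℕ) (a : Fin t → A), ∑ c : Fin t → C, wpTop f πT t a c = 1 := by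
    intro t a; rw [sum_wpTop f hfsum, hπT]
  have hprA : ∀ (t : ℕ) (a : Fin t → A),
      prA e πB f πT t a = ∑ ρ : Fin (t + 1) → RB, bottomWeight e πB t a ρ := by
    intro t a
    unfold prA prAC jointFull
    rw [Finset.sum_comm]
    simp only [← Finset.mul_sum, hS, mul_one]
  have hprARB : ∀ (t : ℕ) (a : Fin t → A) (ρ : Fin (t + 1) → RB),
      prARB e πB f πT t a ρ = bottomWeight e πB t a ρ := by
    intro t a ρ
    unfold prARB jointFull
    rw [← Finset.mul_sum, hS, mul_one]
  have hprAC : ∀ (t : ℕ) (a : Fin t → A) (c : Fin t → C),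
      prAC e πB f πT t a c
        = (∑ ρ : Fin (t + 1) → RB, bottomWeight e πB t a ρ) * wpTop f πT t a c := by
    intro t a c
    unfold prAC jointFull
    rw [Finset.sum_mul]
  constructor
  · intro t a c
    rw [hprAC, hprA]
  · intro t a c ρ
    rw [hprAC, hprA, hprARB]
    unfold jointFull
    ring

end
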